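/- Every connected threshold graph on at least 2 vertices is isomorphic to NSG(m_1,…,m_h; n_1,…,n_h) for some positive integer h and some positive integers m_1,…,m_h, n_1,…,n_h. -/

import Mathlib

/-- A graph is a threshold graph if adjacency is determined by vertex weights
exceeding a threshold. -/
def SimpleGraph.IsThreshold {V : Type*} (G : SimpleGraph V) : Prop :=
  ∃ (S : ℝ) (w : V → ℝ), ∀ u v : V, u ≠ v → (G.Adj u v ↔ S < w u + w v)

/-- The nested split graph `NSG(m₁,…,m_h; n₁,…,n_h)`: the vertex set is the disjoint union
of `U₁,…,U_h, V₁,…,V_h` with `|Uᵢ| = mᵢ`, `|Vᵢ| = nᵢ`; the `Vᵢ`'s form a clique,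
the `Uᵢ`'s form an independent set, and a vertex of `Uᵢ` is adjacent to a vertex of `Vⱼ`
iff `j ≤ i`. -/
def NSG (h : ℕ) (m n : Fin h → ℕ) :
    SimpleGraph ((Σ i : Fin h, Fin (m i)) ⊕ (Σ i : Fin h, Fin (n i))) where
  Adj x y :=
    match x, y with
    | Sum.inl _, Sum.inl _ => False
    | Sum.inl ⟨i, _⟩, Sum.inr ⟨j, _⟩ => j ≤ i
    | Sum.inr ⟨j, _⟩, Sum.inl ⟨i, _⟩ => j ≤ i
    | Sum.inr a, Sum.inr b => a ≠ b
  symm := by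
    refine ⟨?_⟩
    rintro (⟨i, a⟩ | ⟨i, a⟩) (⟨j, b⟩ | ⟨j, b⟩) hadj
    · exact hadj
    · exact hadj
    · exact hadj
    · exact Ne.symm hadj
  loopless := by
    refine ⟨?_⟩
    rintro (⟨i, a⟩ | ⟨i, a⟩) hadj
    · exact hadj
    · exact hadj rfl

/-!
Order the vertices by weight, breaking ties arbitrarily. Then adjacency is upward closed: if
`u ~ v` and `u ≤ u' ≠ v` then `u' ~ v`. Hence the neighbourhood of `v` is `{u ≥ f v} \ {v}`,
where `f v` is the least neighbour of `v`, and `f` is antitone with `f ∘ f ∘ f = f`. The vertices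
with `v < f v` form an independent set, the others a clique, and `u ~ c` iff `f c ≤ f (f u)`;
so the levels of the nested split graph are the values of `f` on the clique.
-/

open Finset

namespace NSG

variable {V : Type*} {h : ℕ} (p : V → Prop) (ℓ : V → Fin h)

noncomputable abbrev sizeU (i : Fin h) : ℕ := Nat.card {x : {v // p v} // ℓ x = i}

noncomputable abbrev sizeV (i : Fin h) : ℕ := Nat.card {x : {v // ¬ p v} // ℓ x = i}

variable [Finite V]

noncomputable def levelEquiv [DecidablePred p] :
    V ≃ (Σ i, Fin (sizeU p ℓ i)) ⊕ (Σ i, Fin (sizeV p ℓ i)) :=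
  (Equiv.sumCompl p).symm.trans <| Equiv.sumCongr
    ((Equiv.sigmaFiberEquiv _).symm.trans (Equiv.sigmaCongrRight fun _ => Finite.equivFin _))
    ((Equiv.sigmaFiberEquiv _).symm.trans (Equiv.sigmaCongrRight fun _ => Finite.equivFin _))

variable {p}

lemma one_le_sizeU (hp : ∀ i, ∃ v, p v ∧ ℓ v = i) (i : Fin h) : 1 ≤ sizeU p ℓ i := by
  obtain ⟨v, hv, rfl⟩ := hp i
  have : Nonempty {x : {v // p v} // ℓ x = ℓ v} := ⟨⟨⟨v, hv⟩, rfl⟩⟩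
  exact Nat.card_pos

lemma one_le_sizeV (hp : ∀ i, ∃ v, ¬ p v ∧ ℓ v = i) (i : Fin h) : 1 ≤ sizeV p ℓ i := by
  obtain ⟨v, hv, rfl⟩ := hp i
  have : Nonempty {x : {v // ¬ p v} // ℓ x = ℓ v} := ⟨⟨⟨v, hv⟩, rfl⟩⟩
  exact Nat.card_pos

variable [DecidablePred p]

lemma levelEquiv_of_pos {v : V} (hv : p v) : ∃ k, levelEquiv p ℓ v = Sum.inl ⟨ℓ v, k⟩ := by
  refine ⟨Finite.equivFin _ ⟨⟨v, hv⟩, rfl⟩, ?_⟩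
  simp only [levelEquiv, Equiv.trans_apply, Equiv.sumCompl_symm_apply_of_pos hv]
  rfl

lemma levelEquiv_of_neg {v : V} (hv : ¬ p v) : ∃ k, levelEquiv p ℓ v = Sum.inr ⟨ℓ v, k⟩ := by
  refine ⟨Finite.equivFin _ ⟨⟨v, hv⟩, rfl⟩, ?_⟩
  simp only [levelEquiv, Equiv.trans_apply, Equiv.sumCompl_symm_apply_of_neg hv]
  rfl

noncomputable def isoOfLevels (G : SimpleGraph V) (hI : ∀ u v, p u → p v → ¬ G.Adj u v)
    (hC : ∀ u v, ¬ p u → ¬ p v → u ≠ v → G.Adj u v)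
    (hIC : ∀ u v, p u → ¬ p v → (G.Adj u v ↔ ℓ v ≤ ℓ u)) :
    G ≃g NSG h (sizeU p ℓ) (sizeV p ℓ) where
  toEquiv := levelEquiv p ℓ
  map_rel_iff' {x y} := by
    by_cases hx : p x <;> by_cases hy : p y
    · obtain ⟨k, hk⟩ := levelEquiv_of_pos ℓ hx
      obtain ⟨l, hl⟩ := levelEquiv_of_pos ℓ hy
      simp only [hk, hl]
      exact iff_of_false id (hI x y hx hy)
    · obtain ⟨k, hk⟩ := levelEquiv_of_pos ℓ hx
      obtain ⟨l, hl⟩ := levelEquiv_of_neg ℓ hy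
      simp only [hk, hl]
      exact (hIC x y hx hy).symm
    · obtain ⟨k, hk⟩ := levelEquiv_of_neg ℓ hx
      obtain ⟨l, hl⟩ := levelEquiv_of_pos ℓ hy
      simp only [hk, hl]
      exact (hIC y x hy hx).symm.trans (G.adj_comm y x)
    · obtain ⟨k, hk⟩ := levelEquiv_of_neg ℓ hx
      obtain ⟨l, hl⟩ := levelEquiv_of_neg ℓ hy
      have hne : (⟨ℓ x, k⟩ : Σ i, Fin (sizeV p ℓ i)) ≠ ⟨ℓ y, l⟩ ↔ x ≠ y := by
        rw [← (levelEquiv p ℓ).injective.ne_iff, hk, hl, Ne, Ne, Sum.inr.injEq]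
      simp only [hk, hl]
      exact hne.trans ⟨hC x y hx hy, G.ne_of_adj⟩

theorem exists_iso_of_levels {V α : Type*} [Fintype V] [Nonempty V] [LinearOrder α]
    (G : SimpleGraph V) (p : V → Prop) (ℓ : V → α)
    (hpos : ∀ v, ∃ u, p u ∧ ℓ u = ℓ v) (hneg : ∀ v, ∃ u, ¬ p u ∧ ℓ u = ℓ v)
    (hI : ∀ u v, p u → p v → ¬ G.Adj u v) (hC : ∀ u v, ¬ p u → ¬ p v → u ≠ v → G.Adj u v)
    (hIC : ∀ u v, p u → ¬ p v → (G.Adj u v ↔ ℓ v ≤ ℓ u)) :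
    ∃ (h : ℕ) (m n : Fin h → ℕ), 1 ≤ h ∧ (∀ i, 1 ≤ m i) ∧ (∀ i, 1 ≤ n i) ∧
      Nonempty (G ≃g NSG h m n) := by
  classical
  set s := univ.image ℓ
  let e : Fin s.card ≃o s := s.orderIsoOfFin rfl
  let ℓ' : V → Fin s.card := fun v => e.symm ⟨ℓ v, mem_image_of_mem ℓ (mem_univ v)⟩
  have hℓ' : ∀ u v, ℓ' u ≤ ℓ' v ↔ ℓ u ≤ ℓ v := fun u v => e.symm.le_iff_le
  have hsurj : ∀ (q : V → Prop), (∀ v, ∃ u, q u ∧ ℓ u = ℓ v) → ∀ i, ∃ u, q u ∧ ℓ' u = i := by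
    intro q hq i
    obtain ⟨v, -, hv⟩ := mem_image.mp (e i).2
    obtain ⟨u, hu, huv⟩ := hq v
    exact ⟨u, hu, e.symm_apply_eq.mpr (Subtype.ext (huv.trans hv))⟩
  refine ⟨s.card, _, _, card_pos.mpr (univ_nonempty.image ℓ), one_le_sizeU ℓ' (hsurj p hpos),
    one_le_sizeV ℓ' (hsurj _ hneg), ⟨isoOfLevels ℓ' G hI hC ?_⟩⟩
  intro u v hu hv
  rw [hIC u v hu hv, hℓ']

end NSG

namespace SimpleGraph

variable {V : Type*} {G : SimpleGraph V}

def AdjUpwardClosed [Preorder V] (G : SimpleGraph V) : Prop :=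
  ∀ ⦃u u' v : V⦄, u ≤ u' → u' ≠ v → G.Adj u v → G.Adj u' v

lemma IsThreshold.exists_linearOrder_adjUpwardClosed [Fintype V] (hG : G.IsThreshold) :
    ∃ _ : LinearOrder V, G.AdjUpwardClosed := by
  obtain ⟨S, w, hw⟩ := hG
  let key : V → ℝ ×ₗ Fin (Fintype.card V) := fun v => toLex (w v, Fintype.equivFin V v)
  let order : LinearOrder V := LinearOrder.lift' key fun u v huv =>
    (Fintype.equivFin V).injective (congrArg (fun q => (ofLex q).2) huv)
  have hw_mono : Monotone w := fun u v huv => Prod.Lex.monotone_fst _ _ huv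
  refine ⟨order, fun u u' v huu' hu'v huv => (hw u' v hu'v).mpr ?_⟩
  linarith [(hw u v huv.ne).mp huv, hw_mono huu']

section MinNeighbor

variable [Fintype V] [LinearOrder V]

variable (G) in
open Classical in
noncomputable def minNeighbor (v : V) : V :=
  if h : (univ.filter (G.Adj v)).Nonempty then (univ.filter (G.Adj v)).min' h else v

variable (G) in
noncomputable def splitLevel (v : V) : V :=
  if v < G.minNeighbor v then G.minNeighbor (G.minNeighbor v) else G.minNeighbor v

lemma splitLevel_of_lt {v : V} (hv : v < G.minNeighbor v) :
    G.splitLevel v = G.minNeighbor (G.minNeighbor v) := if_pos hv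

lemma splitLevel_of_le {v : V} (hv : G.minNeighbor v ≤ v) : G.splitLevel v = G.minNeighbor v :=
  if_neg hv.not_gt

lemma minNeighbor_le_of_adj {u v : V} (h : G.Adj v u) : G.minNeighbor v ≤ u := by
  classical
  have hne : (univ.filter (G.Adj v)).Nonempty := ⟨u, by simpa using h⟩
  rw [minNeighbor, dif_pos hne]
  exact min'_le _ _ (by simpa using h)

lemma adj_minNeighbor {v : V} (hv : ∃ u, G.Adj v u) : G.Adj v (G.minNeighbor v) := by
  classical
  obtain ⟨u, hu⟩ := hv
  have hne : (univ.filter (G.Adj v)).Nonempty := ⟨u, by simpa using hu⟩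
  rw [minNeighbor, dif_pos hne]
  simpa using min'_mem _ hne

lemma not_adj_of_lt_minNeighbor {u v : V} (hu : u < G.minNeighbor u) (hv : v < G.minNeighbor v) :
    ¬ G.Adj u v := fun h =>
  (hu.trans_le (minNeighbor_le_of_adj h)).not_ge ((hv.trans_le (minNeighbor_le_of_adj h.symm)).le)

variable (hN : ∀ v, ∃ u, G.Adj v u) (hG : G.AdjUpwardClosed)
include hN

lemma minNeighbor_ne (v : V) : G.minNeighbor v ≠ v := (adj_minNeighbor (hN v)).ne.symm

lemma minNeighbor_minNeighbor_le (v : V) : G.minNeighbor (G.minNeighbor v) ≤ v :=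
  minNeighbor_le_of_adj (adj_minNeighbor (hN v)).symm

lemma minNeighbor_minNeighbor_le_minNeighbor {v : V} (hv : v < G.minNeighbor v) :
    G.minNeighbor (G.minNeighbor v) ≤ G.minNeighbor v :=
  not_lt.mp fun h => not_adj_of_lt_minNeighbor hv h (adj_minNeighbor (hN v))

include hG

lemma adj_iff_minNeighbor_le {u v : V} : G.Adj v u ↔ v ≠ u ∧ G.minNeighbor v ≤ u :=
  ⟨fun h => ⟨h.ne, minNeighbor_le_of_adj h⟩,
    fun ⟨hvu, hle⟩ => (hG hle hvu.symm (adj_minNeighbor (hN v)).symm).symm⟩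

lemma minNeighbor_antitone : Antitone G.minNeighbor := by
  intro u v huv
  by_cases hv : G.minNeighbor u = v
  · calc G.minNeighbor v ≤ u := minNeighbor_le_of_adj (hv ▸ (adj_minNeighbor (hN u)).symm)
      _ ≤ v := huv
      _ = G.minNeighbor u := hv.symm
  · exact minNeighbor_le_of_adj (hG huv (Ne.symm hv) (adj_minNeighbor (hN u)))

lemma minNeighbor_minNeighbor_minNeighbor (v : V) :
    G.minNeighbor (G.minNeighbor (G.minNeighbor v)) = G.minNeighbor v :=
  le_antisymm (minNeighbor_minNeighbor_le hN _)
    (minNeighbor_antitone hN hG (minNeighbor_minNeighbor_le hN v))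

lemma adj_iff_minNeighbor_le_minNeighbor_minNeighbor {u v : V} (huv : u ≠ v) :
    G.Adj u v ↔ G.minNeighbor v ≤ G.minNeighbor (G.minNeighbor u) := by
  refine ⟨fun h => minNeighbor_antitone hN hG (minNeighbor_le_of_adj h), fun h => ?_⟩
  exact ((adj_iff_minNeighbor_le hN hG).mpr
    ⟨huv.symm, h.trans (minNeighbor_minNeighbor_le hN u)⟩).symm

lemma adj_of_minNeighbor_le {u v : V} (hu : G.minNeighbor u ≤ u) (hv : G.minNeighbor v ≤ v)
    (huv : u ≠ v) : G.Adj u v := by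
  rcases huv.lt_or_gt with h | h
  · exact (adj_iff_minNeighbor_le hN hG).mpr ⟨huv, hu.trans h.le⟩
  · exact ((adj_iff_minNeighbor_le hN hG).mpr ⟨huv.symm, hv.trans h.le⟩).symm

lemma minNeighbor_lt_minNeighbor_minNeighbor {v : V} (hv : G.minNeighbor v ≤ v) :
    G.minNeighbor v < G.minNeighbor (G.minNeighbor v) := by
  refine lt_of_not_ge fun h => ?_
  have hlt : G.minNeighbor (G.minNeighbor v) < G.minNeighbor v :=
    h.lt_of_ne (minNeighbor_ne hN _)
  have hadj : G.Adj (G.minNeighbor (G.minNeighbor v)) v := by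
    rw [adj_iff_minNeighbor_le hN hG, minNeighbor_minNeighbor_minNeighbor hN hG]
    exact ⟨(hlt.trans_le hv).ne, hv⟩
  exact hlt.not_ge (minNeighbor_le_of_adj hadj.symm)

theorem exists_iso_nsg_of_adjUpwardClosed [Nonempty V] :
    ∃ (h : ℕ) (m n : Fin h → ℕ), 1 ≤ h ∧ (∀ i, 1 ≤ m i) ∧ (∀ i, 1 ≤ n i) ∧
      Nonempty (G ≃g NSG h m n) := by
  refine NSG.exists_iso_of_levels G (fun v => v < G.minNeighbor v) G.splitLevel
    (fun v => ?_) (fun v => ?_) (fun u v => not_adj_of_lt_minNeighbor)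
    (fun u v hu hv => adj_of_minNeighbor_le hN hG (not_lt.mp hu) (not_lt.mp hv)) ?_
  · rcases lt_or_ge v (G.minNeighbor v) with hv | hv
    · exact ⟨v, hv, rfl⟩
    · have hfv := minNeighbor_lt_minNeighbor_minNeighbor hN hG hv
      refine ⟨_, hfv, ?_⟩
      rw [splitLevel_of_lt hfv, splitLevel_of_le hv, minNeighbor_minNeighbor_minNeighbor hN hG]
  · rcases lt_or_ge v (G.minNeighbor v) with hv | hv
    · have hfv := minNeighbor_minNeighbor_le_minNeighbor hN hv
      exact ⟨_, hfv.not_gt, by rw [splitLevel_of_le hfv, splitLevel_of_lt hv]⟩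
    · exact ⟨v, hv.not_gt, rfl⟩
  · intro u v hu hv
    rw [splitLevel_of_lt hu, splitLevel_of_le (not_lt.mp hv)]
    exact adj_iff_minNeighbor_le_minNeighbor_minNeighbor hN hG fun h => hv (h ▸ hu)

end MinNeighbor

end SimpleGraph

theorem connected_threshold_iso_nsg {V : Type*} [Fintype V] (G : SimpleGraph V)
    (hcard : 2 ≤ Fintype.card V) (hconn : G.Connected) (hG : G.IsThreshold) :
    ∃ (h : ℕ) (m n : Fin h → ℕ), 1 ≤ h ∧ (∀ i, 1 ≤ m i) ∧ (∀ i, 1 ≤ n i) ∧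
      Nonempty (G ≃g NSG h m n) := by
  have : Nontrivial V := Fintype.one_lt_card_iff_nontrivial.mp hcard
  obtain ⟨_, hup⟩ := hG.exists_linearOrder_adjUpwardClosed
  exact G.exists_iso_nsg_of_adjUpwardClosed hconn.preconnected.exists_adj_of_nontrivial hup
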